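/- Assume μ_{k,0}(θ°) > 0 for every agent k, and let y be the Perron eigenvector of A (A y = y, 1ᵀ y = 1, y ≻ 0). Define the weighted aggregate risk J(μ_i) = ∑_{k=1}^N y(k) · E[ −log μ_{k,i}(θ°) ]. Then the sequence (J(μ_i))_{i≥0} is non-increasing: J(μ_i) ≤ J(μ_{i−1}) for every i ≥ 1; being also nonnegative, it converges. -/

import Mathlib

open MeasureTheory ProbabilityTheory Filter
open Real Finset

/-!
The self-aware update is a convex combination of the prior and the Bayesian posterior, so by
concavity of `log` an agent's risk `-log ψ(θ°)` is at most the same mix of `-log μ(θ°)` and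
`-log posterior(θ°)`. The fresh signal is independent of the past, hence of the current beliefs,
and has law `L(·|θ°)`; averaged over it, the log-posterior of `θ°` exceeds the log-prior by the
Kullback–Leibler divergence from `L(·|θ°)` to the predictive law, which is nonnegative (Gibbs).
Jensen's inequality bounds the risk of a combined belief by the `a`-weighted risks of the
neighbours, and weighting by the Perron vector `y`, which `A` fixes, gives `J(μ_{i+1}) ≤ J(μ_i)`.
Beliefs stay in the simplex, so `J ≥ 0`, and the antitone sequence converges.
-/

theorem sum_mul_log_le_sum_mul_log {ι : Type*} [Fintype ι] {p q : ι → ℝ}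
    (hp : ∀ i, 0 < p i) (hq : ∀ i, 0 < q i) (hpq : ∑ i, p i = ∑ i, q i) :
    ∑ i, q i * log (p i) ≤ ∑ i, q i * log (q i) := by
  have hterm : ∀ i, q i * log (p i) - q i * log (q i) ≤ p i - q i := fun i => by
    rw [← mul_sub, ← log_div (hp i).ne' (hq i).ne']
    calc q i * log (p i / q i) ≤ q i * (p i / q i - 1) :=
          mul_le_mul_of_nonneg_left (log_le_sub_one_of_pos (div_pos (hp i) (hq i))) (hq i).le
      _ = p i - q i := by rw [mul_sub, mul_div_cancel₀ _ (hq i).ne', mul_one]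
  have := sum_le_sum fun i (_ : i ∈ univ) => hterm i
  rw [sum_sub_distrib, sum_sub_distrib, hpq, sub_self] at this
  linarith

section Update

variable {Θ Z : Type*} [Fintype Θ]

noncomputable def bayesUpdate (ℓ : Θ → Z → ℝ) (b : Θ → ℝ) (ζ : Z) (θ : Θ) : ℝ :=
  b θ * ℓ θ ζ / ∑ θ', b θ' * ℓ θ' ζ

noncomputable def selfAwareUpdate (γ : ℝ) (ℓ : Θ → Z → ℝ) (b : Θ → ℝ) (ζ : Z) : Θ → ℝ :=
  (1 - γ) • b + γ • bayesUpdate ℓ b ζ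

variable {ℓ : Θ → Z → ℝ} {b : Θ → ℝ} {γ : ℝ}

theorem sum_mul_likelihood_pos (hℓ : ∀ θ ζ, 0 < ℓ θ ζ) (hb : b ∈ stdSimplex ℝ Θ) (ζ : Z) :
    0 < ∑ θ, b θ * ℓ θ ζ := by
  obtain ⟨θ, -, hθ⟩ : ∃ θ ∈ univ, (0 : ℝ) < b θ :=
    exists_lt_of_sum_lt (by simp [hb.2])
  exact sum_pos' (fun θ _ => mul_nonneg (hb.1 θ) (hℓ θ ζ).le)
    ⟨θ, mem_univ θ, mul_pos hθ (hℓ θ ζ)⟩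

theorem bayesUpdate_mem_stdSimplex (hℓ : ∀ θ ζ, 0 < ℓ θ ζ) (hb : b ∈ stdSimplex ℝ Θ) (ζ : Z) :
    bayesUpdate ℓ b ζ ∈ stdSimplex ℝ Θ :=
  ⟨fun θ => div_nonneg (mul_nonneg (hb.1 θ) (hℓ θ ζ).le) (sum_mul_likelihood_pos hℓ hb ζ).le,
    by simp only [bayesUpdate, ← sum_div, div_self (sum_mul_likelihood_pos hℓ hb ζ).ne']⟩

theorem bayesUpdate_pos (hℓ : ∀ θ ζ, 0 < ℓ θ ζ) (hb : b ∈ stdSimplex ℝ Θ) {θ : Θ}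
    (hθ : 0 < b θ) (ζ : Z) : 0 < bayesUpdate ℓ b ζ θ :=
  div_pos (mul_pos hθ (hℓ θ ζ)) (sum_mul_likelihood_pos hℓ hb ζ)

theorem selfAwareUpdate_mem_stdSimplex (hγ : γ ∈ Set.Icc (0 : ℝ) 1) (hℓ : ∀ θ ζ, 0 < ℓ θ ζ)
    (hb : b ∈ stdSimplex ℝ Θ) (ζ : Z) : selfAwareUpdate γ ℓ b ζ ∈ stdSimplex ℝ Θ :=
  convex_stdSimplex ℝ Θ hb (bayesUpdate_mem_stdSimplex hℓ hb ζ) (sub_nonneg.2 hγ.2) hγ.1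
    (sub_add_cancel 1 γ)

theorem neg_log_selfAwareUpdate_le (hγ : γ ∈ Set.Icc (0 : ℝ) 1) (hℓ : ∀ θ ζ, 0 < ℓ θ ζ)
    (hb : b ∈ stdSimplex ℝ Θ) {θ : Θ} (hθ : 0 < b θ) (ζ : Z) :
    -log (selfAwareUpdate γ ℓ b ζ θ) ≤
      (1 - γ) * -log (b θ) + γ * -log (bayesUpdate ℓ b ζ θ) := by
  have := strictConcaveOn_log_Ioi.concaveOn.2 (Set.mem_Ioi.2 hθ)
    (Set.mem_Ioi.2 (bayesUpdate_pos hℓ hb hθ ζ)) (sub_nonneg.2 hγ.2) hγ.1 (sub_add_cancel 1 γ)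
  simp only [smul_eq_mul] at this
  simp only [selfAwareUpdate, Pi.add_apply, Pi.smul_apply, smul_eq_mul]
  linarith

theorem selfAwareUpdate_pos (hγ : γ ∈ Set.Icc (0 : ℝ) 1) (hℓ : ∀ θ ζ, 0 < ℓ θ ζ)
    (hb : b ∈ stdSimplex ℝ Θ) {θ : Θ} (hθ : 0 < b θ) (ζ : Z) :
    0 < selfAwareUpdate γ ℓ b ζ θ :=
  convex_Ioi (0 : ℝ) hθ (bayesUpdate_pos hℓ hb hθ ζ) (sub_nonneg.2 hγ.2) hγ.1 (sub_add_cancel 1 γ)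

theorem sum_mul_neg_log_bayesUpdate_le [Fintype Z] (hℓ : ∀ θ ζ, 0 < ℓ θ ζ)
    (hℓ1 : ∀ θ, ∑ ζ, ℓ θ ζ = 1) (hb : b ∈ stdSimplex ℝ Θ) {θ : Θ} (hθ : 0 < b θ) :
    ∑ ζ, ℓ θ ζ * -log (bayesUpdate ℓ b ζ θ) ≤ -log (b θ) := by
  have hevidence : ∑ ζ, ∑ θ', b θ' * ℓ θ' ζ = ∑ ζ, ℓ θ ζ := by
    rw [sum_comm, hℓ1]
    simp only [← mul_sum, hℓ1, mul_one, hb.2]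
  have hgibbs := sum_mul_log_le_sum_mul_log (sum_mul_likelihood_pos hℓ hb) (hℓ θ) hevidence
  have hlog : ∀ ζ, log (bayesUpdate ℓ b ζ θ) =
      log (b θ) + log (ℓ θ ζ) - log (∑ θ', b θ' * ℓ θ' ζ) := fun ζ => by
    rw [bayesUpdate, log_div (mul_pos hθ (hℓ θ ζ)).ne' (sum_mul_likelihood_pos hℓ hb ζ).ne',
      log_mul hθ.ne' (hℓ θ ζ).ne']
  simp only [hlog, mul_neg, mul_sub, mul_add, sum_neg_distrib, sum_sub_distrib, sum_add_distrib,
    ← sum_mul, hℓ1, one_mul]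
  linarith

theorem sum_mul_neg_log_selfAwareUpdate_le [Fintype Z] (hγ : γ ∈ Set.Icc (0 : ℝ) 1)
    (hℓ : ∀ θ ζ, 0 < ℓ θ ζ) (hℓ1 : ∀ θ, ∑ ζ, ℓ θ ζ = 1)
    (hb : b ∈ stdSimplex ℝ Θ) {θ : Θ} (hθ : 0 < b θ) :
    ∑ ζ, ℓ θ ζ * -log (selfAwareUpdate γ ℓ b ζ θ) ≤ -log (b θ) :=
  calc ∑ ζ, ℓ θ ζ * -log (selfAwareUpdate γ ℓ b ζ θ)
      ≤ ∑ ζ, ℓ θ ζ * ((1 - γ) * -log (b θ) + γ * -log (bayesUpdate ℓ b ζ θ)) :=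
        sum_le_sum fun ζ _ => mul_le_mul_of_nonneg_left
          (neg_log_selfAwareUpdate_le hγ hℓ hb hθ ζ) (hℓ θ ζ).le
    _ = (1 - γ) * -log (b θ) + γ * ∑ ζ, ℓ θ ζ * -log (bayesUpdate ℓ b ζ θ) := by
        simp only [mul_add, sum_add_distrib, ← sum_mul, hℓ1, mul_sum]
        congr 1
        · ring
        · exact sum_congr rfl fun ζ _ => by ring
    _ ≤ -log (b θ) := by
        nlinarith [sum_mul_neg_log_bayesUpdate_le hℓ hℓ1 hb hθ, hγ.1]

end Update

theorem neg_log_sum_mul_le {ι : Type*} [Fintype ι] {w x : ι → ℝ} (hw0 : ∀ i, 0 ≤ w i)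
    (hw1 : ∑ i, w i = 1) (hx : ∀ i, 0 < x i) :
    -log (∑ i, w i * x i) ≤ ∑ i, w i * -log (x i) := by
  have := strictConcaveOn_log_Ioi.concaveOn.le_map_sum (fun i _ => hw0 i) hw1
    fun i _ => Set.mem_Ioi.2 (hx i)
  simp only [smul_eq_mul] at this
  simpa only [mul_neg, sum_neg_distrib, neg_le_neg_iff] using this

theorem sum_mul_le_of_eigenvector {ι : Type*} [Fintype ι] {a : ι → ι → ℝ} {y : ι → ℝ}
    (hy : ∀ l, ∑ k, a l k * y k = y l) (hy0 : ∀ k, 0 ≤ y k) {c d : ι → ℝ}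
    (hcd : ∀ k, c k ≤ ∑ l, a l k * d l) :
    ∑ k, y k * c k ≤ ∑ l, y l * d l :=
  calc ∑ k, y k * c k ≤ ∑ k, y k * ∑ l, a l k * d l :=
        sum_le_sum fun k _ => mul_le_mul_of_nonneg_left (hcd k) (hy0 k)
    _ = ∑ l, y l * d l := by
        simp only [mul_sum]
        rw [sum_comm]
        refine sum_congr rfl fun l _ => ?_
        rw [← hy l, sum_mul]
        exact sum_congr rfl fun k _ => by ring

section Diffusion

variable {ι Θ : Type*} [Fintype ι] [Fintype Θ] {Z : ι → Type*}

noncomputable def diffusionStep (a : ι → ι → ℝ) (γ : ι → ℝ) (L : (k : ι) → Θ → Z k → ℝ)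
    (b : ι → Θ → ℝ) (ζ : (k : ι) → Z k) (k : ι) : Θ → ℝ :=
  ∑ l, a l k • selfAwareUpdate (γ l) (L l) (b l) (ζ l)

variable {a : ι → ι → ℝ} {γ : ι → ℝ} {L : (k : ι) → Θ → Z k → ℝ} {b : ι → Θ → ℝ}

theorem diffusionStep_mem_stdSimplex (ha0 : ∀ l k, 0 ≤ a l k) (ha1 : ∀ k, ∑ l, a l k = 1)
    (hγ : ∀ k, γ k ∈ Set.Icc (0 : ℝ) 1) (hL : ∀ k θ ζ, 0 < L k θ ζ)
    (hb : ∀ k, b k ∈ stdSimplex ℝ Θ) (ζ : (k : ι) → Z k) (k : ι) :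
    diffusionStep a γ L b ζ k ∈ stdSimplex ℝ Θ :=
  (convex_stdSimplex ℝ Θ).sum_mem (fun l _ => ha0 l k) (ha1 k)
    fun l _ => selfAwareUpdate_mem_stdSimplex (hγ l) (hL l) (hb l) (ζ l)

theorem neg_log_diffusionStep_le (ha0 : ∀ l k, 0 ≤ a l k) (ha1 : ∀ k, ∑ l, a l k = 1)
    (hγ : ∀ k, γ k ∈ Set.Icc (0 : ℝ) 1) (hL : ∀ k θ ζ, 0 < L k θ ζ)
    (hb : ∀ k, b k ∈ stdSimplex ℝ Θ) {θ : Θ} (hbθ : ∀ k, 0 < b k θ)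
    (ζ : (k : ι) → Z k) (k : ι) :
    -log (diffusionStep a γ L b ζ k θ) ≤
      ∑ l, a l k * -log (selfAwareUpdate (γ l) (L l) (b l) (ζ l) θ) := by
  simpa only [diffusionStep, Finset.sum_apply, Pi.smul_apply, smul_eq_mul] using
    neg_log_sum_mul_le (fun l => ha0 l k) (ha1 k)
      fun l => selfAwareUpdate_pos (hγ l) (hL l) (hb l) (hbθ l) (ζ l)

theorem diffusionStep_pos (ha0 : ∀ l k, 0 ≤ a l k) (ha1 : ∀ k, ∑ l, a l k = 1)
    (hγ : ∀ k, γ k ∈ Set.Icc (0 : ℝ) 1) (hL : ∀ k θ ζ, 0 < L k θ ζ)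
    (hb : ∀ k, b k ∈ stdSimplex ℝ Θ) {θ : Θ} (hbθ : ∀ k, 0 < b k θ)
    (ζ : (k : ι) → Z k) (k : ι) : 0 < diffusionStep a γ L b ζ k θ := by
  simpa only [diffusionStep, Finset.sum_apply, Pi.smul_apply, smul_eq_mul] using
    Set.mem_Ioi.1 <| (convex_Ioi (0 : ℝ)).sum_mem (fun l _ => ha0 l k) (ha1 k)
      fun l _ => selfAwareUpdate_pos (hγ l) (hL l) (hb l) (hbθ l) (ζ l)

end Diffusion

section Independence

variable {Ω α β : Type*} [MeasurableSpace Ω] {P : Measure Ω} [MeasurableSpace α]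
  [MeasurableSpace β]

theorem integrable_comp_of_finite [IsFiniteMeasure P] [Finite α] [MeasurableSingletonClass α]
    {X : Ω → α} (hX : Measurable X) (g : α → ℝ) : Integrable (fun ω => g (X ω)) P :=
  Integrable.of_finite.comp_measurable hX

theorem ProbabilityTheory.IndepFun.integral_comp_eq_sum [IsProbabilityMeasure P] [Finite α]
    [MeasurableSingletonClass α] [Fintype β] [MeasurableSingletonClass β] {X : Ω → α}
    {Y : Ω → β} (hX : Measurable X) (hY : Measurable Y) (hXY : IndepFun X Y P)
    (F : α → β → ℝ) :
    ∫ ω, F (X ω) (Y ω) ∂P = ∑ z, P.real (Y ⁻¹' {z}) * ∫ ω, F (X ω) z ∂P :=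
  calc ∫ ω, F (X ω) (Y ω) ∂P = ∫ p, Function.uncurry F p ∂(P.map fun ω => (X ω, Y ω)) :=
        (integral_map (f := Function.uncurry F) (hX.prodMk hY).aemeasurable
          (measurable_of_finite _).aestronglyMeasurable).symm
    _ = ∫ p, Function.uncurry F p ∂((P.map X).prod (P.map Y)) := by
        rw [hXY.map_prod_eq_prod_map_map hX.aemeasurable hY.aemeasurable]
    _ = ∫ z, ∫ x, F x z ∂(P.map X) ∂(P.map Y) := integral_prod_symm _ Integrable.of_finite
    _ = ∑ z, P.real (Y ⁻¹' {z}) * ∫ ω, F (X ω) z ∂P := by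
        rw [integral_fintype Integrable.of_finite]
        refine sum_congr rfl fun z _ => ?_
        rw [map_measureReal_apply hY (measurableSet_singleton z), smul_eq_mul,
          integral_map hX.aemeasurable (measurable_of_finite _).aestronglyMeasurable]

end Independence

section WeightedRisk

variable {Ω ι Θ : Type*} [MeasurableSpace Ω] [Fintype ι]

-- The paper's aggregate risk `J`, for beliefs `b ω k` of agent `k` in outcome `ω`.
noncomputable def weightedRisk (P : Measure Ω) (y : ι → ℝ)
    (b : Ω → ι → Θ → ℝ) (θ₀ : Θ) : ℝ :=
  ∑ k, y k * ∫ ω, -log (b ω k θ₀) ∂P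

theorem weightedRisk_nonneg [Fintype Θ] {P : Measure Ω} {y : ι → ℝ} (hy0 : ∀ k, 0 ≤ y k)
    {b : Ω → ι → Θ → ℝ} (hb : ∀ ω k, b ω k ∈ stdSimplex ℝ Θ) (θ₀ : Θ) :
    0 ≤ weightedRisk P y b θ₀ :=
  sum_nonneg fun k _ => mul_nonneg (hy0 k) <| integral_nonneg fun ω =>
    neg_nonneg.2 <| log_nonpos ((hb ω k).1 θ₀) (mem_Icc_of_mem_stdSimplex (hb ω k) θ₀).2

end WeightedRisk

section ExpectedRisk

variable {Ω α Θ : Type*} [MeasurableSpace Ω] {P : Measure Ω} [IsProbabilityMeasure P]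
  [MeasurableSpace α] [Finite α] [MeasurableSingletonClass α] [Fintype Θ] {X : Ω → α}

theorem integral_neg_log_selfAwareUpdate_le {Z : Type*} [Fintype Z] [MeasurableSpace Z]
    [MeasurableSingletonClass Z] {Y : Ω → Z} (hX : Measurable X) (hY : Measurable Y)
    (hXY : IndepFun X Y P) {ℓ : Θ → Z → ℝ} {θ₀ : Θ}
    (hY_law : ∀ ζ, P.real (Y ⁻¹' {ζ}) = ℓ θ₀ ζ) (hℓ : ∀ θ ζ, 0 < ℓ θ ζ)
    (hℓ1 : ∀ θ, ∑ ζ, ℓ θ ζ = 1) {γ : ℝ} (hγ : γ ∈ Set.Icc (0 : ℝ) 1) {B : α → Θ → ℝ}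
    (hB : ∀ ω, B (X ω) ∈ stdSimplex ℝ Θ) (hB₀ : ∀ ω, 0 < B (X ω) θ₀) :
    ∫ ω, -log (selfAwareUpdate γ ℓ (B (X ω)) (Y ω) θ₀) ∂P ≤ ∫ ω, -log (B (X ω) θ₀) ∂P := by
  rw [hXY.integral_comp_eq_sum hX hY fun x ζ => -log (selfAwareUpdate γ ℓ (B x) ζ θ₀)]
  calc ∑ ζ, P.real (Y ⁻¹' {ζ}) * ∫ ω, -log (selfAwareUpdate γ ℓ (B (X ω)) ζ θ₀) ∂P
      = ∫ ω, ∑ ζ, ℓ θ₀ ζ * -log (selfAwareUpdate γ ℓ (B (X ω)) ζ θ₀) ∂P := by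
        rw [integral_finsetSum _ fun ζ _ => (integrable_comp_of_finite hX
          fun x => -log (selfAwareUpdate γ ℓ (B x) ζ θ₀)).const_mul (ℓ θ₀ ζ)]
        simp only [hY_law, integral_const_mul]
    _ ≤ ∫ ω, -log (B (X ω) θ₀) ∂P :=
        integral_mono
          (integrable_comp_of_finite hX fun x =>
            ∑ ζ, ℓ θ₀ ζ * -log (selfAwareUpdate γ ℓ (B x) ζ θ₀))
          (integrable_comp_of_finite hX fun x => -log (B x θ₀))
          fun ω => sum_mul_neg_log_selfAwareUpdate_le hγ hℓ hℓ1 (hB ω) (hB₀ ω)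

theorem weightedRisk_diffusionStep_le {ι : Type*} [Fintype ι] {Z : ι → Type*}
    [∀ k, Fintype (Z k)] [∀ k, MeasurableSpace (Z k)] [∀ k, MeasurableSingletonClass (Z k)]
    {Y : (k : ι) → Ω → Z k} (hX : Measurable X) (hY : ∀ k, Measurable (Y k))
    (hXY : ∀ k, IndepFun X (Y k) P) {L : (k : ι) → Θ → Z k → ℝ} {θ₀ : Θ}
    (hY_law : ∀ k ζ, P.real (Y k ⁻¹' {ζ}) = L k θ₀ ζ) (hL : ∀ k θ ζ, 0 < L k θ ζ)
    (hL1 : ∀ k θ, ∑ ζ, L k θ ζ = 1) {a : ι → ι → ℝ} (ha0 : ∀ l k, 0 ≤ a l k)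
    (ha1 : ∀ k, ∑ l, a l k = 1) {y : ι → ℝ} (hy : ∀ l, ∑ k, a l k * y k = y l)
    (hy0 : ∀ k, 0 ≤ y k) {γ : ι → ℝ} (hγ : ∀ k, γ k ∈ Set.Icc (0 : ℝ) 1)
    {B : α → ι → Θ → ℝ} (hB : ∀ ω k, B (X ω) k ∈ stdSimplex ℝ Θ)
    (hB₀ : ∀ ω k, 0 < B (X ω) k θ₀) :
    weightedRisk P y (fun ω => diffusionStep a γ L (B (X ω)) (fun l => Y l ω)) θ₀ ≤
      weightedRisk P y (fun ω => B (X ω)) θ₀ := by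
  have hW : Measurable fun ω => (X ω, fun l => Y l ω) := hX.prodMk (measurable_pi_lambda _ hY)
  have hint : ∀ l, Integrable
      (fun ω => -log (selfAwareUpdate (γ l) (L l) (B (X ω) l) (Y l ω) θ₀)) P := fun l =>
    integrable_comp_of_finite hW fun w => -log (selfAwareUpdate (γ l) (L l) (B w.1 l) (w.2 l) θ₀)
  refine sum_mul_le_of_eigenvector hy hy0 fun k => ?_
  calc ∫ ω, -log (diffusionStep a γ L (B (X ω)) (fun l => Y l ω) k θ₀) ∂P
      ≤ ∫ ω, ∑ l, a l k * -log (selfAwareUpdate (γ l) (L l) (B (X ω) l) (Y l ω) θ₀) ∂P :=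
        integral_mono
          (integrable_comp_of_finite hW fun w => -log (diffusionStep a γ L (B w.1) w.2 k θ₀))
          (integrable_finsetSum _ fun l _ => (hint l).const_mul _)
          fun ω => neg_log_diffusionStep_le ha0 ha1 hγ hL (hB ω) (hB₀ ω) _ k
    _ = ∑ l, a l k * ∫ ω, -log (selfAwareUpdate (γ l) (L l) (B (X ω) l) (Y l ω) θ₀) ∂P := by
        rw [integral_finsetSum _ fun l _ => (hint l).const_mul _]
        simp only [integral_const_mul]
    _ ≤ ∑ l, a l k * ∫ ω, -log (B (X ω) l θ₀) ∂P :=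
        sum_le_sum fun l _ => mul_le_mul_of_nonneg_left
          (integral_neg_log_selfAwareUpdate_le (B := fun x => B x l) hX (hY l) (hXY l)
            (hY_law l) (hL l) (hL1 l) (hγ l) (fun ω => hB ω l) fun ω => hB₀ ω l) (ha0 l k)

end ExpectedRisk

section History

variable {Ω ι : Type*} [Fintype ι] {Z : ι → Type*}

def pastSignals (ι : Type*) [Fintype ι] (n : ℕ) : Finset (ι × ℕ) := univ ×ˢ range n

def history (ξ : (k : ι) → ℕ → Ω → Z k) (n : ℕ) (ω : Ω) :
    (p : pastSignals ι n) → Z p.1.1 :=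
  fun p => ξ p.1.1 p.1.2 ω

theorem history_succ_eq {ξ : (k : ι) → ℕ → Ω → Z k} {n : ℕ} {ω ω' : Ω}
    (h : history ξ (n + 1) ω = history ξ (n + 1) ω') :
    history ξ n ω = history ξ n ω' ∧ ∀ k, ξ k n ω = ξ k n ω' := by
  have hmono : pastSignals ι n ⊆ pastSignals ι (n + 1) :=
    product_subset_product_right (range_subset_range.2 n.le_succ)
  exact ⟨funext fun p => congrFun h ⟨p.1, hmono p.2⟩,
    fun k => congrFun h ⟨(k, n), by simp [pastSignals]⟩⟩

variable [MeasurableSpace Ω] [∀ k, MeasurableSpace (Z k)] {ξ : (k : ι) → ℕ → Ω → Z k}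

theorem measurable_history (hξ : ∀ k i, Measurable (ξ k i)) (n : ℕ) :
    Measurable (history ξ n) :=
  measurable_pi_lambda _ fun p => hξ p.1.1 p.1.2

theorem indepFun_history {P : Measure Ω} (hξ : ∀ k i, Measurable (ξ k i))
    (hindep : iIndepFun (fun p : ι × ℕ => ξ p.1 p.2) P) (k : ι) (n : ℕ) :
    IndepFun (history ξ n) (ξ k n) P := by
  have hdisj : Disjoint (pastSignals ι n) {(k, n)} := by simp [pastSignals]
  exact (hindep.indepFun_finset _ _ hdisj fun p => hξ p.1 p.2).comp measurable_id
    (measurable_pi_apply ⟨(k, n), mem_singleton_self _⟩)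

end History

section DiffusionLearning

variable {Ω ι Θ : Type*} [Fintype ι] [Fintype Θ] {Z : ι → Type*} {ξ : (k : ι) → ℕ → Ω → Z k}

theorem factorsThrough_history {β : Type*} {F : ℕ → β → ((k : ι) → Z k) → β} {b : ℕ → Ω → β}
    {b₀ : β} (hb₀ : ∀ ω, b 0 ω = b₀) (hb : ∀ i ω, b (i + 1) ω = F i (b i ω) fun k => ξ k i ω)
    (i : ℕ) : Function.FactorsThrough (b i) (history ξ i) := by
  induction i with
  | zero => exact fun ω ω' _ => (hb₀ ω).trans (hb₀ ω').symm
  | succ i ih =>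
    intro ω ω' h
    obtain ⟨hpast, hnow⟩ := history_succ_eq h
    rw [hb, hb, ih hpast, funext hnow]

variable {a : ι → ι → ℝ} {γ : ι → ℕ → ℝ} {L : (k : ι) → Θ → Z k → ℝ} {b : ℕ → Ω → ι → Θ → ℝ}
  {b₀ : ι → Θ → ℝ} {θ₀ : Θ}

theorem diffusion_mem_stdSimplex_and_pos (ha0 : ∀ l k, 0 ≤ a l k) (ha1 : ∀ k, ∑ l, a l k = 1)
    (hγ : ∀ k i, γ k i ∈ Set.Icc (0 : ℝ) 1) (hL : ∀ k θ ζ, 0 < L k θ ζ)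
    (hb₀ : ∀ ω, b 0 ω = b₀) (hb₀_mem : ∀ k, b₀ k ∈ stdSimplex ℝ Θ) (hb₀_pos : ∀ k, 0 < b₀ k θ₀)
    (hb : ∀ i ω, b (i + 1) ω = diffusionStep a (γ · i) L (b i ω) fun k => ξ k i ω)
    (i : ℕ) (ω : Ω) : (∀ k, b i ω k ∈ stdSimplex ℝ Θ) ∧ ∀ k, 0 < b i ω k θ₀ := by
  induction i with
  | zero => exact hb₀ ω ▸ ⟨hb₀_mem, hb₀_pos⟩
  | succ i ih =>
    rw [hb]
    exact ⟨diffusionStep_mem_stdSimplex ha0 ha1 (hγ · i) hL ih.1 _,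
      diffusionStep_pos ha0 ha1 (hγ · i) hL ih.1 ih.2 _⟩

theorem weightedRisk_succ_le [MeasurableSpace Ω] {P : Measure Ω} [IsProbabilityMeasure P]
    [∀ k, Fintype (Z k)] [∀ k, MeasurableSpace (Z k)] [∀ k, MeasurableSingletonClass (Z k)]
    (hξ : ∀ k i, Measurable (ξ k i)) (hindep : iIndepFun (fun p : ι × ℕ => ξ p.1 p.2) P)
    (hξ_law : ∀ k i ζ, P.real (ξ k i ⁻¹' {ζ}) = L k θ₀ ζ) (hL : ∀ k θ ζ, 0 < L k θ ζ)
    (hL1 : ∀ k θ, ∑ ζ, L k θ ζ = 1) (ha0 : ∀ l k, 0 ≤ a l k) (ha1 : ∀ k, ∑ l, a l k = 1)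
    {y : ι → ℝ} (hy : ∀ l, ∑ k, a l k * y k = y l) (hy0 : ∀ k, 0 ≤ y k)
    (hγ : ∀ k i, γ k i ∈ Set.Icc (0 : ℝ) 1)
    (hb₀ : ∀ ω, b 0 ω = b₀) (hb₀_mem : ∀ k, b₀ k ∈ stdSimplex ℝ Θ) (hb₀_pos : ∀ k, 0 < b₀ k θ₀)
    (hb : ∀ i ω, b (i + 1) ω = diffusionStep a (γ · i) L (b i ω) fun k => ξ k i ω) (i : ℕ) :
    weightedRisk P y (b (i + 1)) θ₀ ≤ weightedRisk P y (b i) θ₀ := by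
  have hbelief := diffusion_mem_stdSimplex_and_pos ha0 ha1 hγ hL hb₀ hb₀_mem hb₀_pos hb i
  -- The beliefs at time `i` are a function of the signals before `i`, hence independent of the
  -- signals at time `i`.
  set B := Function.extend (history ξ i) (b i) 0
  have hB : b i = fun ω => B (history ξ i ω) :=
    funext fun ω => ((factorsThrough_history hb₀ hb i).extend_apply 0 ω).symm
  rw [show b (i + 1) = _ from funext (hb i), hB]
  rw [hB] at hbelief
  exact weightedRisk_diffusionStep_le (measurable_history hξ i) (hξ · i)
    (indepFun_history hξ hindep · i) (hξ_law · i) hL hL1 ha0 ha1 hy hy0 (hγ · i)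
    (fun ω => (hbelief ω).1) fun ω => (hbelief ω).2

end DiffusionLearning

-- `ξ k i` and `γ k i` are the signal and self-awareness weight of the paper's time `i + 1`.
theorem stmt_17_general
    {Ω : Type} [MeasurableSpace Ω] (P : Measure Ω) [IsProbabilityMeasure P]
    {N : ℕ}
    (a : Fin N → Fin N → ℝ)
    (ha0 : ∀ l k, 0 ≤ a l k)
    (ha1 : ∀ k, ∑ l, a l k = 1)
    (y : Fin N → ℝ)
    (hy_eig : ∀ l, ∑ k, a l k * y k = y l)
    (hy_pos : ∀ k, 0 < y k)
    {Θ : Type} [Fintype Θ] (θ0 : Θ)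
    (Z : Fin N → Type) [∀ k, Fintype (Z k)] [∀ k, MeasurableSpace (Z k)]
    [∀ k, MeasurableSingletonClass (Z k)]
    (L : (k : Fin N) → Θ → Z k → ℝ)
    (hLpos : ∀ k θ ζ, 0 < L k θ ζ)
    (hLsum : ∀ k θ, ∑ ζ, L k θ ζ = 1)
    (ξ : (k : Fin N) → ℕ → Ω → Z k)
    (hmeas : ∀ k i, Measurable (ξ k i))
    (hindep : iIndepFun
      (fun p : Fin N × ℕ => ξ p.1 p.2) P)
    (hlaw : ∀ (k : Fin N) (i : ℕ) (ζ : Z k),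
      P (ξ k i ⁻¹' {ζ}) = ENNReal.ofReal (L k θ0 ζ))
    (γ : Fin N → ℕ → ℝ)
    (hγ01 : ∀ k i, γ k i ∈ Set.Icc (0 : ℝ) 1)
    (μ0 : Fin N → Θ → ℝ)
    (hμ0nn : ∀ k θ, 0 ≤ μ0 k θ) (hμ0sum : ∀ k, ∑ θ, μ0 k θ = 1)
    (hμ0pos : ∀ k, 0 < μ0 k θ0)
    (μ ψ : ℕ → Fin N → Θ → Ω → ℝ)
    (hinit : ∀ k θ ω, μ 0 k θ ω = μ0 k θ)
    (hψ : ∀ (i : ℕ) (k : Fin N) (θ : Θ) (ω : Ω), ψ (i + 1) k θ ω =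
      (1 - γ k i) * μ i k θ ω +
        γ k i * (μ i k θ ω * L k θ (ξ k i ω) / ∑ θ' : Θ, μ i k θ' ω * L k θ' (ξ k i ω)))
    (hμ : ∀ (i : ℕ) (k : Fin N) (θ : Θ) (ω : Ω),
      μ (i + 1) k θ ω = ∑ l : Fin N, a l k * ψ (i + 1) l θ ω) :
    (∀ i : ℕ,
      ∑ k : Fin N, y k * ∫ ω, (-Real.log (μ (i + 1) k θ0 ω)) ∂P ≤
        ∑ k : Fin N, y k * ∫ ω, (-Real.log (μ i k θ0 ω)) ∂P) ∧
    (∀ i : ℕ, 0 ≤ ∑ k : Fin N, y k * ∫ ω, (-Real.log (μ i k θ0 ω)) ∂P) ∧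
    (∃ c : ℝ, Tendsto
      (fun i => ∑ k : Fin N, y k * ∫ ω, (-Real.log (μ i k θ0 ω)) ∂P)
      atTop (nhds c)) := by
  set b : ℕ → Ω → Fin N → Θ → ℝ := fun i ω k θ => μ i k θ ω
  have hb : ∀ i ω, b (i + 1) ω = diffusionStep a (γ · i) L (b i ω) fun k => ξ k i ω := by
    intro i ω
    ext k θ
    simp only [b, hμ, hψ, diffusionStep, selfAwareUpdate, bayesUpdate, Finset.sum_apply,
      Pi.add_apply, Pi.smul_apply, smul_eq_mul]
  have hb₀ : ∀ ω, b 0 ω = μ0 := fun ω => by ext k θ; exact hinit k θ ω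
  have hμ0_mem : ∀ k, μ0 k ∈ stdSimplex ℝ Θ := fun k => ⟨hμ0nn k, hμ0sum k⟩
  have hξ_law : ∀ k i ζ, P.real (ξ k i ⁻¹' {ζ}) = L k θ0 ζ := fun k i ζ => by
    rw [measureReal_def, hlaw, ENNReal.toReal_ofReal (hLpos k θ0 ζ).le]
  have hrisk_le : ∀ i, weightedRisk P y (b (i + 1)) θ0 ≤ weightedRisk P y (b i) θ0 :=
    weightedRisk_succ_le hmeas hindep hξ_law hLpos hLsum ha0 ha1 hy_eig (fun k => (hy_pos k).le)
      hγ01 hb₀ hμ0_mem hμ0pos hb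
  have hrisk_nonneg : ∀ i, 0 ≤ weightedRisk P y (b i) θ0 := fun i =>
    weightedRisk_nonneg (fun k => (hy_pos k).le) (fun ω =>
      (diffusion_mem_stdSimplex_and_pos ha0 ha1 hγ01 hLpos hb₀ hμ0_mem hμ0pos hb i ω).1) θ0
  exact ⟨hrisk_le, hrisk_nonneg, _, tendsto_atTop_ciInf (antitone_nat_of_succ_le hrisk_le)
    ⟨0, by rintro _ ⟨i, rfl⟩; exact hrisk_nonneg i⟩⟩

/-- Self-aware diffusion social learning over a strongly-connected network
with all priors positive at the true state `θ0`.  With `y` the Perron eigenvector of the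
combination matrix (`Ay = y`, `1ᵀy = 1`, `y ≻ 0`), the weighted aggregate risk
`J(μ_i) = ∑_k y(k) E[−log μ_{k,i}(θ0)]` is non-increasing in `i`; being also nonnegative,
it converges.  (Here `ξ k i` and `γ k i` refer to time `i+1` of the paper's indexing.) -/
theorem stmt_17
    {Ω : Type} [MeasurableSpace Ω] (P : Measure Ω) [IsProbabilityMeasure P]
    {N : ℕ}
    (a : Fin N → Fin N → ℝ)
    (ha0 : ∀ l k, 0 ≤ a l k)
    (ha1 : ∀ k, ∑ l, a l k = 1)
    (haprim : ∃ n : ℕ, ∀ l k, 0 < ((Matrix.of a) ^ n) l k)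
    (y : Fin N → ℝ)
    (hy_eig : ∀ l, ∑ k, a l k * y k = y l)
    (hy_sum : ∑ k, y k = 1)
    (hy_pos : ∀ k, 0 < y k)
    {Θ : Type} [Fintype Θ] (θ0 : Θ)
    (Z : Fin N → Type) [∀ k, Fintype (Z k)] [∀ k, MeasurableSpace (Z k)]
    [∀ k, MeasurableSingletonClass (Z k)]
    (L : (k : Fin N) → Θ → Z k → ℝ)
    (hLpos : ∀ k θ ζ, 0 < L k θ ζ)
    (hLsum : ∀ k θ, ∑ ζ, L k θ ζ = 1)
    (ξ : (k : Fin N) → ℕ → Ω → Z k)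
    (hmeas : ∀ k i, Measurable (ξ k i))
    (hindep : iIndepFun
      (fun p : Fin N × ℕ => ξ p.1 p.2) P)
    (hlaw : ∀ (k : Fin N) (i : ℕ) (ζ : Z k),
      P (ξ k i ⁻¹' {ζ}) = ENNReal.ofReal (L k θ0 ζ))
    (γ : Fin N → ℕ → ℝ)
    (hγ01 : ∀ k i, γ k i ∈ Set.Icc (0 : ℝ) 1)
    (μ0 : Fin N → Θ → ℝ)
    (hμ0nn : ∀ k θ, 0 ≤ μ0 k θ) (hμ0sum : ∀ k, ∑ θ, μ0 k θ = 1)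
    (hμ0pos : ∀ k, 0 < μ0 k θ0)
    (μ ψ : ℕ → Fin N → Θ → Ω → ℝ)
    (hinit : ∀ k θ ω, μ 0 k θ ω = μ0 k θ)
    (hψ : ∀ (i : ℕ) (k : Fin N) (θ : Θ) (ω : Ω), ψ (i + 1) k θ ω =
      (1 - γ k i) * μ i k θ ω +
        γ k i * (μ i k θ ω * L k θ (ξ k i ω) / ∑ θ' : Θ, μ i k θ' ω * L k θ' (ξ k i ω)))
    (hμ : ∀ (i : ℕ) (k : Fin N) (θ : Θ) (ω : Ω),
      μ (i + 1) k θ ω = ∑ l : Fin N, a l k * ψ (i + 1) l θ ω) :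
    (∀ i : ℕ,
      ∑ k : Fin N, y k * ∫ ω, (-Real.log (μ (i + 1) k θ0 ω)) ∂P ≤
        ∑ k : Fin N, y k * ∫ ω, (-Real.log (μ i k θ0 ω)) ∂P) ∧
    (∀ i : ℕ, 0 ≤ ∑ k : Fin N, y k * ∫ ω, (-Real.log (μ i k θ0 ω)) ∂P) ∧
    (∃ c : ℝ, Tendsto
      (fun i => ∑ k : Fin N, y k * ∫ ω, (-Real.log (μ i k θ0 ω)) ∂P)
      atTop (nhds c)) :=
  stmt_17_general P a ha0 ha1 y hy_eig hy_pos θ0 Z L hLpos hLsum ξ hmeas hindep hlaw γ hγ01 μ0 hμ0nn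
    hμ0sum hμ0pos μ ψ hinit hψ hμ
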